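/- Let V : ℕ × ℝⁿ → ℝ and suppose there exist a strictly increasing continuous function γ with γ(0) = 0 such that V(t, x) ≥ γ(‖x‖) for all t and all x in a ball B_d around the origin, a strictly increasing continuous function ε with ε(0) = 0 such that V(t, x) ≤ ε(‖x‖), and a strictly increasing continuous function ρ with ρ(0) = 0 such that V(t−1, x(t−1)) − V(t, x(t)) ≥ ρ(‖x(t−1)‖) along trajectories of the system x(t+1) = f(x(t)). Then ‖x(t)‖ → 0 as t → ∞ for every trajectory starting in a sufficiently small neighborhood of the origin, i.e., the origin is locally asymptotically stable. -/
import Mathlib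


open Filter Metric

/-- Discrete-time Lyapunov theorem. Consider the system `x(t+1) = f(x(t))` with `f` continuous
and `f 0 = 0`, and a candidate Lyapunov function `V : ℕ × ℝⁿ → ℝ`. Suppose there exist
continuous strictly increasing functions `γ, ε, ρ` vanishing at `0` such that
`V(t, x) ≥ γ(‖x‖)` on a ball `B_d` around the origin, `V(t, x) ≤ ε(‖x‖)` everywhere, and along
every trajectory `V(t, x(t)) - V(t+1, x(t+1)) ≥ ρ(‖x(t)‖)`. Then trajectories starting in a
sufficiently small neighborhood of the origin satisfy `‖x(t)‖ → 0`: the origin is locally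
asymptotically stable. -/
theorem stmt15 {n : ℕ}
    (f : EuclideanSpace ℝ (Fin n) → EuclideanSpace ℝ (Fin n))
    (hf : Continuous f) (hf0 : f 0 = 0)
    (V : ℕ → EuclideanSpace ℝ (Fin n) → ℝ)
    (d : ℝ) (hd : 0 < d)
    (γ : ℝ → ℝ) (hγc : Continuous γ) (hγm : StrictMono γ) (hγ0 : γ 0 = 0)
    (hlower : ∀ t, ∀ x ∈ Metric.closedBall (0 : EuclideanSpace ℝ (Fin n)) d,
      γ ‖x‖ ≤ V t x)
    (ε : ℝ → ℝ) (hεc : Continuous ε) (hεm : StrictMono ε) (hε0 : ε 0 = 0)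
    (hupper : ∀ t x, V t x ≤ ε ‖x‖)
    (ρ : ℝ → ℝ) (hρc : Continuous ρ) (hρm : StrictMono ρ) (hρ0 : ρ 0 = 0)
    (hdecr : ∀ x : ℕ → EuclideanSpace ℝ (Fin n), (∀ t, x (t + 1) = f (x t)) →
      ∀ t, ρ ‖x t‖ ≤ V t (x t) - V (t + 1) (x (t + 1))) :
    ∃ δ > 0, ∀ x : ℕ → EuclideanSpace ℝ (Fin n), (∀ t, x (t + 1) = f (x t)) →
      ‖x 0‖ < δ → Tendsto (fun t => ‖x t‖) atTop (nhds 0) := by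
  -- continuity of f at 0: small inputs give outputs in the ball of radius d
  obtain ⟨δ', hδ'pos, hδ'⟩ : ∃ δ' > 0, ∀ y : EuclideanSpace ℝ (Fin n), ‖y‖ < δ' → ‖f y‖ < d := by
    have hca : ContinuousAt f 0 := hf.continuousAt
    obtain ⟨δ', hδ'pos, h⟩ := Metric.continuousAt_iff.mp hca d hd
    refine ⟨δ', hδ'pos, fun y hy => ?_⟩
    have := h (x := y) (by simpa [dist_eq_norm] using hy)
    simpa [dist_eq_norm, hf0] using this
  set c : ℝ := min δ' d with hc
  have hcpos : 0 < c := lt_min hδ'pos hd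
  have hγcpos : 0 < γ c := hγ0 ▸ hγm hcpos
  -- continuity of ε at 0
  obtain ⟨δ₀, hδ₀pos, hδ₀⟩ : ∃ δ₀ > 0, ∀ s : ℝ, |s| < δ₀ → ε s < γ c := by
    have hca : ContinuousAt ε 0 := hεc.continuousAt
    obtain ⟨δ₀, hδ₀pos, h⟩ := Metric.continuousAt_iff.mp hca (γ c) hγcpos
    refine ⟨δ₀, hδ₀pos, fun s hs => ?_⟩
    have := h (x := s) (by simpa [Real.dist_eq] using hs)
    rw [Real.dist_eq, hε0, sub_zero] at this
    exact lt_of_le_of_lt (le_abs_self _) this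
  refine ⟨min δ₀ c, lt_min hδ₀pos hcpos, fun x hx hx0 => ?_⟩
  set W : ℕ → ℝ := fun t => V t (x t) with hW
  have hρnn : ∀ t, 0 ≤ ρ ‖x t‖ := fun t => hρ0 ▸ hρm.monotone (norm_nonneg _)
  have hWstep : ∀ t, W (t + 1) ≤ W t := fun t => by
    have := hdecr x hx t
    have h2 := hρnn t
    simp only [hW]; linarith
  have hanti : Antitone W := antitone_nat_of_succ_le hWstep
  have hW0 : W 0 < γ c := by
    have h1 : W 0 ≤ ε ‖x 0‖ := hupper 0 (x 0)
    have h2 : ε ‖x 0‖ < γ c := hδ₀ _ (by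
      rw [abs_of_nonneg (norm_nonneg _)]
      exact lt_of_lt_of_le hx0 (min_le_left _ _))
    linarith
  have hWlt : ∀ t, W t < γ c := fun t => lt_of_le_of_lt (hanti (Nat.zero_le t)) hW0
  -- invariance: ‖x t‖ < c for all t
  have hinv : ∀ t, ‖x t‖ < c := by
    intro t
    induction t with
    | zero => exact lt_of_lt_of_le hx0 (min_le_right _ _)
    | succ k ih =>
      have hball : x (k + 1) ∈ Metric.closedBall (0 : EuclideanSpace ℝ (Fin n)) d := by
        rw [Metric.mem_closedBall, dist_zero_right]
        have : ‖x (k + 1)‖ < d := by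
          rw [hx k]
          exact hδ' _ (lt_of_lt_of_le ih (min_le_left _ _))
        linarith
      have hγle : γ ‖x (k + 1)‖ ≤ W (k + 1) := hlower _ _ hball
      by_contra hge
      push_neg at hge
      have : γ c ≤ γ ‖x (k + 1)‖ := hγm.monotone hge
      have := hWlt (k + 1)
      linarith
  have hball : ∀ t, x t ∈ Metric.closedBall (0 : EuclideanSpace ℝ (Fin n)) d := fun t => by
    rw [Metric.mem_closedBall, dist_zero_right]
    exact le_of_lt (lt_of_lt_of_le (hinv t) (min_le_right _ _))
  have hWlb : ∀ t, 0 ≤ W t := fun t =>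
    le_trans (hγ0 ▸ hγm.monotone (norm_nonneg _)) (hlower t (x t) (hball t))
  have hbdd : BddBelow (Set.range W) := ⟨0, by rintro _ ⟨t, rfl⟩; exact hWlb t⟩
  have hWtend : Tendsto W atTop (nhds (⨅ t, W t)) := tendsto_atTop_ciInf hanti hbdd
  have hWtend' : Tendsto (fun t => W (t + 1)) atTop (nhds (⨅ t, W t)) :=
    hWtend.comp (tendsto_add_atTop_nat 1)
  have hdiff : Tendsto (fun t => W t - W (t + 1)) atTop (nhds 0) := by
    have := hWtend.sub hWtend'
    simpa using this
  have hρtend : Tendsto (fun t => ρ ‖x t‖) atTop (nhds 0) := by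
    refine squeeze_zero hρnn (fun t => ?_) hdiff
    exact hdecr x hx t
  rw [Metric.tendsto_atTop]
  intro η hη
  have hρη : 0 < ρ η := hρ0 ▸ hρm hη
  rw [Metric.tendsto_atTop] at hρtend
  obtain ⟨N, hN⟩ := hρtend (ρ η) hρη
  refine ⟨N, fun t ht => ?_⟩
  have h1 : ρ ‖x t‖ < ρ η := by
    have := hN t ht
    rw [Real.dist_eq, sub_zero, abs_of_nonneg (hρnn t)] at this
    exact this
  have h2 : ‖x t‖ < η := by
    by_contra hge
    push_neg at hge
    exact absurd (hρm.monotone hge) (not_le.mpr h1)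
  rw [Real.dist_eq, sub_zero, abs_of_nonneg (norm_nonneg _)]
  exact h2
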